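/- arXiv:1209.3523 — 5 statements merged into one kernel-verified Lean document; each statement's English description precedes it below -/
import Mathlib

section
/- Let G = (V,E) be a finite connected graph, F a spanning tree of G, and T ⊆ V with |T| even. Then there is exactly one subset J ⊆ F that is a T-join of G. -/
open scoped Classical
open Finset

noncomputable section

variable {V : Type*} [Fintype V] [DecidableEq V]

/-- The edge set of a graph as a `Finset` of `Sym2 V`. -/
def edgesOf (G : SimpleGraph V) : Finset (Sym2 V) :=
  Finset.univ.filter (fun e => e ∈ G.edgeSet)

/-- Degree of a vertex in a set of edges. -/
def degOn (J : Finset (Sym2 V)) (v : V) : ℕ :=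
  (J.filter (fun e => v ∈ e)).card

/-- The set of vertices of odd degree in a set of edges. -/
def oddVerts (J : Finset (Sym2 V)) : Finset V :=
  Finset.univ.filter (fun v => Odd (degOn J v))

/-- `J` is a `T`-join of `G`: a set of edges of `G` whose odd-degree vertex set is `T`. -/
def IsTJoin (G : SimpleGraph V) (T : Finset V) (J : Finset (Sym2 V)) : Prop :=
  J ⊆ edgesOf G ∧ oddVerts J = T

/-- `F` is a spanning tree of `G`: edges of `G`, connected, with `|V| - 1` edges. -/
def IsSpanningTree (G : SimpleGraph V) (F : Finset (Sym2 V)) : Prop :=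
  F ⊆ edgesOf G ∧ (SimpleGraph.fromEdgeSet (F : Set (Sym2 V))).Connected ∧
    F.card + 1 = Fintype.card V

/-- δ(W): the set of edges of `G` with exactly one endpoint in `W`. -/
def cutEdges (G : SimpleGraph V) (W : Finset V) : Finset (Sym2 V) :=
  (edgesOf G).filter (fun e => ∃ u v, e = s(u, v) ∧ u ∈ W ∧ v ∉ W)

/-- `𝒲` is a partition of the vertex set `V`. -/
def IsPartitionOf (𝒲 : Finset (Finset V)) : Prop :=
  (∀ W ∈ 𝒲, W.Nonempty) ∧
  (∀ W₁ ∈ 𝒲, ∀ W₂ ∈ 𝒲, W₁ ≠ W₂ → Disjoint W₁ W₂) ∧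
  (∀ v : V, ∃ W ∈ 𝒲, v ∈ W)

/-- δ(𝒲): the set of edges of `G` whose endpoints lie in different classes of `𝒲`. -/
def partitionCut (G : SimpleGraph V) (𝒲 : Finset (Finset V)) : Finset (Sym2 V) :=
  (edgesOf G).filter (fun e => ¬ ∃ W ∈ 𝒲, ∀ v ∈ e, v ∈ W)

/-- `x(A) = Σ_{e ∈ A} x(e)`. -/
def xval (x : Sym2 V → ℝ) (A : Finset (Sym2 V)) : ℝ := ∑ e ∈ A, x e

/-- `cᵀx`, summed over the edges of `G`. -/
def dotE (G : SimpleGraph V) (c x : Sym2 V → ℝ) : ℝ := ∑ e ∈ edgesOf G, c e * x e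

/-- Membership in the polyhedron `P(G,T)`. -/
def memP (G : SimpleGraph V) (T : Finset V) (x : Sym2 V → ℝ) : Prop :=
  (∀ W : Finset V, W.Nonempty → W ≠ Finset.univ → Even ((W ∩ T).card) →
      2 ≤ xval x (cutEdges G W)) ∧
  (∀ 𝒲 : Finset (Finset V), IsPartitionOf 𝒲 →
      (𝒲.card : ℝ) - 1 ≤ xval x (partitionCut G 𝒲)) ∧
  (∀ e ∈ edgesOf G, 0 ≤ x e ∧ x e ≤ 2)

/-- `m` (an edge multiplicity vector, values in `{0,1,2}`) is a `T`-tour of `G`: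
its support consists of edges of `G`, the support spans a connected graph on `V`,
and the vertices of odd degree (with multiplicities) are exactly `T`. -/
def IsTTour (G : SimpleGraph V) (T : Finset V) (m : Sym2 V → ℕ) : Prop :=
  (∀ e, 0 < m e → e ∈ G.edgeSet) ∧ (∀ e, m e ≤ 2) ∧
  (SimpleGraph.fromEdgeSet {e | 0 < m e}).Connected ∧
  (∀ v : V, (Odd (∑ e ∈ edgesOf G, if v ∈ e then m e else 0) ↔ v ∈ T))

/-- The `c`-length of a multiset of edges given by multiplicities `m`. -/
def tourCost (G : SimpleGraph V) (c : Sym2 V → ℝ) (m : Sym2 V → ℕ) : ℝ :=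
  ∑ e ∈ edgesOf G, (m e : ℝ) * c e

/-- `opt(G,T,c)`: the minimum `c`-length of a `T`-tour. -/
def optLen (G : SimpleGraph V) (T : Finset V) (c : Sym2 V → ℝ) : ℝ :=
  sInf {L : ℝ | ∃ m, IsTTour G T m ∧ L = tourCost G c m}

/-- The `c`-length of a set of edges. -/
def setCost (c : Sym2 V → ℝ) (J : Finset (Sym2 V)) : ℝ := ∑ e ∈ J, c e

/-- `τ(G,T',c)`: the minimum `c`-length of a `T'`-join. -/
def tau (G : SimpleGraph V) (T' : Finset V) (c : Sym2 V → ℝ) : ℝ :=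
  sInf {L : ℝ | ∃ J, IsTJoin G T' J ∧ L = setCost c J}

/-- Membership in `Q₊(G,T')`: nonnegative and at least `1` on every `T'`-cut. -/
def memQplus (G : SimpleGraph V) (T' : Finset V) (x : Sym2 V → ℝ) : Prop :=
  (∀ e ∈ edgesOf G, 0 ≤ x e) ∧
  (∀ W : Finset V, W.Nonempty → W ≠ Finset.univ → Odd ((W ∩ T').card) →
      1 ≤ xval x (cutEdges G W))

/-- Symmetric difference of two finite sets. -/
def symDiff (A B : Finset V) : Finset V := (A \ B) ∪ (B \ A)

/-- `p*(e) = Σ_{F ∈ 𝓕, e ∈ F(T)} λ_F`, where `JT F` plays the role of `F(T)`. -/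
def pstar (𝓕 : Finset (Finset (Sym2 V))) (lam : Finset (Sym2 V) → ℝ)
    (JT : Finset (Sym2 V) → Finset (Sym2 V)) (e : Sym2 V) : ℝ :=
  ∑ F ∈ 𝓕.filter (fun F => e ∈ JT F), lam F

/-- `q*(e) = Σ_{F ∈ 𝓕, e ∈ F ∖ F(T)} λ_F`. -/
def qstar (𝓕 : Finset (Finset (Sym2 V))) (lam : Finset (Sym2 V) → ℝ)
    (JT : Finset (Sym2 V) → Finset (Sym2 V)) (e : Sym2 V) : ℝ :=
  ∑ F ∈ 𝓕.filter (fun F => e ∈ F \ JT F), lam F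

/-- `𝒬`: the family of cuts `Q` of `G` (as edge sets) with `x*(Q) < 2`. -/
def Qset (G : SimpleGraph V) (xstar : Sym2 V → ℝ) : Finset (Finset (Sym2 V)) :=
  Finset.univ.filter (fun C : Finset (Sym2 V) =>
    (∃ W : Finset V, W.Nonempty ∧ W ≠ Finset.univ ∧ C = cutEdges G W) ∧ xval xstar C < 2)

/-- `x^Q(e) = Σ_{F ∈ 𝓕, Q ∩ F = {e}} λ_F`. -/
def xQ (𝓕 : Finset (Finset (Sym2 V))) (lam : Finset (Sym2 V) → ℝ)
    (C : Finset (Sym2 V)) (e : Sym2 V) : ℝ :=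
  ∑ F ∈ 𝓕.filter (fun F => C ∩ F = {e}), lam F

/-- `f^Q(β) = max {0, (4β - 1 - β x*(Q)) / (2 - x*(Q))}`. -/
def fQ (xstar : Sym2 V → ℝ) (β : ℝ) (C : Finset (Sym2 V)) : ℝ :=
  max 0 ((4 * β - 1 - β * xval xstar C) / (2 - xval xstar C))

/-- `s^F(β) = Σ_{Q ∈ 𝒬, |Q ∩ F| ≥ 2} f^Q(β) x^Q`. -/
def sF (G : SimpleGraph V) (xstar : Sym2 V → ℝ) (𝓕 : Finset (Finset (Sym2 V)))
    (lam : Finset (Sym2 V) → ℝ) (β : ℝ) (F : Finset (Sym2 V)) (e : Sym2 V) : ℝ :=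
  ∑ C ∈ (Qset G xstar).filter (fun C => 2 ≤ (C ∩ F).card), fQ xstar β C * xQ 𝓕 lam C e

end


/-! Symmetric difference with the edges of an `a`–`r` path flips the degree parity exactly at `a`
and `r`. Adding such paths one vertex at a time shows that in a connected graph every even `T` is
the odd-degree set of some edge set: the root `r` is the only possible defect, and it is excluded
by the handshake lemma. For the spanning tree `F`, `J ↦ oddVerts J` thus maps the `2 ^ #F` subsets
of `F` onto the `2 ^ (|V| - 1) = 2 ^ #F` even subsets of `V`, so it is injective there. -/
open scoped symmDiff
open Finset

theorem Finset.card_symmDiff_add_two_mul_card_inter {α : Type*} [DecidableEq α] (s t : Finset α) :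
    #(s ∆ t) + 2 * #(s ∩ t) = #s + #t := by
  have hunion := card_union_add_card_inter s t
  have hle := card_le_card (inter_subset_union (s := s) (t := t))
  rw [symmDiff_eq_sup_sdiff_inf, sup_eq_union, inf_eq_inter,
    card_sdiff_of_subset inter_subset_union]
  omega

theorem Finset.two_mul_card_filter_even_card_powerset {α : Type*} {s : Finset α}
    (hs : s.Nonempty) : 2 * #{t ∈ s.powerset | Even #t} = 2 ^ #s := by
  have hsum := sum_powerset_neg_one_pow_card_of_nonempty hs
  rw [← sum_filter_add_sum_filter_not _ (fun t => Even #t)] at hsum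
  have htot := card_filter_add_card_filter_not (s := s.powerset) (fun t => Even #t)
  rw [card_powerset] at htot
  have heven : ∑ t ∈ s.powerset with Even #t, (-1 : ℤ) ^ #t = #{t ∈ s.powerset | Even #t} := by
    rw [card_eq_sum_ones, Nat.cast_sum]
    exact sum_congr rfl fun t ht => by simp [(mem_filter.mp ht).2.neg_one_pow]
  have hodd : ∑ t ∈ s.powerset with ¬Even #t, (-1 : ℤ) ^ #t =
      -#{t ∈ s.powerset | ¬Even #t} := by
    rw [card_eq_sum_ones, Nat.cast_sum, ← sum_neg_distrib]
    exact sum_congr rfl fun t ht => by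
      simp [(Nat.not_even_iff_odd.mp (mem_filter.mp ht).2).neg_one_pow]
  omega

section TJoin

variable {V : Type*} [Fintype V] [DecidableEq V]

lemma mem_oddVerts {J : Finset (Sym2 V)} {v : V} : v ∈ oddVerts J ↔ Odd (degOn J v) := by
  simp [oddVerts]

lemma oddVerts_symmDiff (A B : Finset (Sym2 V)) :
    oddVerts (A ∆ B) = oddVerts A ∆ oddVerts B := by
  ext v
  have hfilter : (A ∆ B).filter (v ∈ ·) = A.filter (v ∈ ·) ∆ B.filter (v ∈ ·) := by
    ext e; simp only [mem_filter, mem_symmDiff]; tauto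
  have := card_symmDiff_add_two_mul_card_inter (A.filter (v ∈ ·)) (B.filter (v ∈ ·))
  rw [← hfilter] at this
  simp only [mem_symmDiff, mem_oddVerts, degOn, Nat.odd_iff]
  omega

lemma sum_degOn {J : Finset (Sym2 V)} (hJ : ∀ e ∈ J, ¬e.IsDiag) :
    ∑ v, degOn J v = 2 * #J := by
  simp only [degOn, card_filter]
  rw [sum_comm, mul_comm, card_eq_sum_ones, sum_mul]
  refine sum_congr rfl fun e he => ?_
  induction e using Sym2.ind with
  | _ a b =>
    have hab : a ≠ b := by simpa using hJ _ he
    rw [← card_filter, one_mul, ← card_pair hab]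
    congr 1; ext; simp [eq_comm]

lemma even_card_oddVerts {J : Finset (Sym2 V)} (hJ : ∀ e ∈ J, ¬e.IsDiag) :
    Even #(oddVerts J) :=
  (even_sum_iff_even_card_odd _).mp ⟨#J, by rw [sum_degOn hJ]; ring⟩

lemma SimpleGraph.Walk.IsTrail.oddVerts_edges {G : SimpleGraph V} {u v : V} {p : G.Walk u v}
    (hp : p.IsTrail) : oddVerts p.edges.toFinset = {u} ∆ {v} := by
  ext x
  have hdeg : degOn p.edges.toFinset x = p.edges.countP (x ∈ ·) := by
    rw [degOn, List.countP_eq_length_filter, ← List.toFinset_card_of_nodup (hp.edges_nodup.filter _)]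
    congr 1; ext; simp
  rw [mem_oddVerts, hdeg, ← Nat.not_even_iff_odd, hp.even_countP_edges_iff]
  simp only [mem_symmDiff, mem_singleton]
  grind

lemma SimpleGraph.Connected.exists_oddVerts_symmDiff_subset {H : SimpleGraph V}
    (hH : H.Connected) (r : V) (T : Finset V) :
    ∃ J : Finset (Sym2 V), ↑J ⊆ H.edgeSet ∧ oddVerts J ∆ T ⊆ {r} := by
  induction T using Finset.induction_on with
  | empty => exact ⟨∅, by simp, by simp [oddVerts, degOn]⟩
  | @insert a T haT ih =>
    obtain ⟨J, hJH, hJT⟩ := ih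
    let p := (hH.preconnected a r).some.toPath
    refine ⟨J ∆ p.1.edges.toFinset, ?_, ?_⟩
    · intro e he
      rcases mem_symmDiff.mp he with ⟨he, -⟩ | ⟨he, -⟩
      · exact hJH he
      · exact p.1.edges_subset_edgeSet (List.mem_toFinset.mp he)
    · rw [oddVerts_symmDiff, p.2.isTrail.oddVerts_edges]
      intro x hx
      have := @hJT x
      simp only [mem_symmDiff, mem_insert, mem_singleton] at hx this ⊢
      grind

lemma SimpleGraph.Connected.exists_oddVerts_eq {H : SimpleGraph V} (hH : H.Connected)
    {T : Finset V} (hT : Even #T) :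
    ∃ J : Finset (Sym2 V), ↑J ⊆ H.edgeSet ∧ oddVerts J = T := by
  obtain ⟨r⟩ := hH.nonempty
  obtain ⟨J, hJH, hJT⟩ := hH.exists_oddVerts_symmDiff_subset r T
  refine ⟨J, hJH, ?_⟩
  rcases subset_singleton_iff.mp hJT with h | h
  · exact symmDiff_eq_bot.mp h
  · have hparity := card_symmDiff_add_two_mul_card_inter (oddVerts J) T
    have hJ := even_card_oddVerts fun e he => H.not_isDiag_of_mem_edgeSet (hJH he)
    rw [h, card_singleton] at hparity
    rw [Nat.even_iff] at hT hJ
    omega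

end TJoin

section SpanningTree

variable {V : Type*} [Fintype V] [DecidableEq V] {G : SimpleGraph V} {F : Finset (Sym2 V)}

lemma IsSpanningTree.exists_oddVerts_eq (hF : IsSpanningTree G F) {T : Finset V}
    (hT : Even #T) : ∃ J ⊆ F, oddVerts J = T := by
  obtain ⟨J, hJF, hJT⟩ := hF.2.1.exists_oddVerts_eq hT
  refine ⟨J, fun e he => ?_, hJT⟩
  have := hJF he
  rw [SimpleGraph.edgeSet_fromEdgeSet] at this
  exact this.1

lemma IsSpanningTree.injOn_oddVerts (hF : IsSpanningTree G F) :
    Set.InjOn oddVerts (F.powerset : Set (Finset (Sym2 V))) := by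
  have hV : (univ : Finset V).Nonempty := univ_nonempty_iff.mpr hF.2.1.nonempty
  have hsurj : {S ∈ (univ : Finset V).powerset | Even #S} ⊆ F.powerset.image oddVerts := by
    intro S hS
    obtain ⟨J, hJF, hJS⟩ := hF.exists_oddVerts_eq (mem_filter.mp hS).2
    exact mem_image.mpr ⟨J, mem_powerset.mpr hJF, hJS⟩
  have hcard : #{S ∈ (univ : Finset V).powerset | Even #S} = #F.powerset := by
    have := two_mul_card_filter_even_card_powerset hV
    rw [card_univ, ← hF.2.2, pow_succ] at this
    rw [card_powerset]
    omega
  exact injOn_of_card_image_eq (le_antisymm card_image_le (hcard ▸ card_le_card hsurj))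

end SpanningTree

theorem stmt2_general {V : Type*} [Fintype V] [DecidableEq V]
    (G : SimpleGraph V)
    (T : Finset V) (hT : Even T.card)
    (F : Finset (Sym2 V)) (hF : IsSpanningTree G F) :
    ∃! J : Finset (Sym2 V), J ⊆ F ∧ IsTJoin G T J := by
  obtain ⟨J, hJF, hJT⟩ := hF.exists_oddVerts_eq hT
  refine ⟨J, ⟨hJF, hJF.trans hF.1, hJT⟩, ?_⟩
  rintro J' ⟨hJ'F, -, hJ'T⟩
  exact hF.injOn_oddVerts (mem_powerset.mpr hJ'F) (mem_powerset.mpr hJF) (hJ'T.trans hJT.symm)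

/-- every spanning tree of a connected graph contains exactly one
`T`-join, for `T` of even cardinality. -/
theorem stmt2 {V : Type*} [Fintype V] [DecidableEq V]
    (G : SimpleGraph V) (hG : G.Connected)
    (T : Finset V) (hT : Even T.card)
    (F : Finset (Sym2 V)) (hF : IsSpanningTree G F) :
    ∃! J : Finset (Sym2 V), J ⊆ F ∧ IsTJoin G T J :=
  stmt2_general G T hT F hF
end

section
/- For every T' ⊆ V with |T'| even, the vector (x* + p*)/2 lies in Q_+(G,T'); equivalently, for every T'-cut C one has x*(C) + p*(C) ≥ 2. -/
open scoped Classical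
open Finset

noncomputable section

variable {V : Type*} [Fintype V] [DecidableEq V]

lemma aux_mem_cutEdges {G : SimpleGraph V} {W : Finset V} {a b : V} (hab : G.Adj a b) :
    s(a, b) ∈ cutEdges G W ↔ ((a ∈ W ∧ b ∉ W) ∨ (b ∈ W ∧ a ∉ W)) := by
  simp only [cutEdges, edgesOf, Finset.mem_filter, Finset.mem_univ, true_and,
    SimpleGraph.mem_edgeSet]
  constructor
  · rintro ⟨-, u, v, huv, hu, hv⟩
    rw [Sym2.eq_iff] at huv
    rcases huv with ⟨rfl, rfl⟩ | ⟨rfl, rfl⟩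
    · exact Or.inl ⟨hu, hv⟩
    · exact Or.inr ⟨hu, hv⟩
  · rintro (⟨h1, h2⟩ | ⟨h1, h2⟩)
    · exact ⟨hab, a, b, rfl, h1, h2⟩
    · exact ⟨hab, b, a, Sym2.eq_swap.symm, h1, h2⟩

lemma aux_cast_parity (n : ℕ) : (n : ZMod 2) = if Odd n then 1 else 0 := by
  rcases Nat.even_or_odd n with h | h
  · rw [← ZMod.natCast_mod, Nat.even_iff.mp h, if_neg (by simpa [Nat.odd_iff] using Nat.even_iff.mp h)]
    simp
  · rw [← ZMod.natCast_mod, Nat.odd_iff.mp h, if_pos h]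
    simp

lemma aux_key (G : SimpleGraph V) (W : Finset V) :
    ∀ e, e ∈ edgesOf G →
      (((W.filter (fun v => v ∈ e)).card : ZMod 2)) = if e ∈ cutEdges G W then 1 else 0 := by
  intro e
  induction e using Sym2.ind with
  | _ a b =>
    intro he
    have hadj : G.Adj a b := by
      simpa [edgesOf] using he
    have hab : a ≠ b := hadj.ne
    have hmem : ∀ v : V, v ∈ s(a, b) ↔ v = a ∨ v = b := fun v => Sym2.mem_iff
    simp only [aux_mem_cutEdges hadj]
    by_cases ha : a ∈ W <;> by_cases hb : b ∈ W
    · have : W.filter (fun v => v ∈ s(a, b)) = {a, b} := by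
        ext v; simp [hmem]; rintro (rfl | rfl) <;> simp [ha, hb]
      rw [this, Finset.card_pair hab]
      simp [ha, hb]
      decide
    · have : W.filter (fun v => v ∈ s(a, b)) = {a} := by
        ext v; simp [hmem]; constructor
        · rintro ⟨hv, rfl | rfl⟩ <;> [rfl; exact absurd hv hb]
        · rintro rfl; exact ⟨ha, Or.inl rfl⟩
      rw [this]; simp [ha, hb]
    · have : W.filter (fun v => v ∈ s(a, b)) = {b} := by
        ext v; simp [hmem]; constructor
        · rintro ⟨hv, rfl | rfl⟩ <;> [exact absurd hv ha; rfl]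
        · rintro rfl; exact ⟨hb, Or.inr rfl⟩
      rw [this]; simp [ha, hb]
    · have : W.filter (fun v => v ∈ s(a, b)) = ∅ := by
        ext v; simp [hmem]; intro hv
        exact ⟨fun h => ha (h ▸ hv), fun h => hb (h ▸ hv)⟩
      rw [this]; simp [ha, hb]

lemma aux_cut_parity (G : SimpleGraph V) (J : Finset (Sym2 V)) (hJ : J ⊆ edgesOf G)
    (W : Finset V) :
    ((J ∩ cutEdges G W).card : ZMod 2) = ((W ∩ oddVerts J).card : ZMod 2) := by
  calc ((J ∩ cutEdges G W).card : ZMod 2)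
      = ∑ e ∈ J, if e ∈ cutEdges G W then (1 : ZMod 2) else 0 := by
        rw [← Finset.filter_mem_eq_inter, Finset.card_filter, Nat.cast_sum]
        simp
    _ = ∑ e ∈ J, ((W.filter (fun v => v ∈ e)).card : ZMod 2) :=
        (Finset.sum_congr rfl fun e he => (aux_key G W e (hJ he)).symm)
    _ = ∑ e ∈ J, ∑ v ∈ W, if v ∈ e then (1 : ZMod 2) else 0 := by
        refine Finset.sum_congr rfl fun e _ => ?_
        rw [Finset.card_filter, Nat.cast_sum]
        simp
    _ = ∑ v ∈ W, ∑ e ∈ J, if v ∈ e then (1 : ZMod 2) else 0 := Finset.sum_comm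
    _ = ∑ v ∈ W, (degOn J v : ZMod 2) := by
        refine Finset.sum_congr rfl fun v _ => ?_
        rw [degOn, Finset.card_filter, Nat.cast_sum]
        simp
    _ = ∑ v ∈ W, if Odd (degOn J v) then (1 : ZMod 2) else 0 :=
        Finset.sum_congr rfl fun v _ => aux_cast_parity _
    _ = ((W.filter (fun v => Odd (degOn J v))).card : ZMod 2) := by
        rw [Finset.card_filter, Nat.cast_sum]
        simp
    _ = ((W ∩ oddVerts J).card : ZMod 2) := by
        congr 2
        ext v
        simp [oddVerts]

lemma aux_join_cut_nonempty {G : SimpleGraph V} {T : Finset V} {J : Finset (Sym2 V)}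
    {W : Finset V} (hJ : IsTJoin G T J) (hodd : Odd ((W ∩ T).card)) :
    (J ∩ cutEdges G W).Nonempty := by
  have h := aux_cut_parity G J hJ.1 W
  rw [hJ.2] at h
  have h1 : (((W ∩ T).card : ℕ) : ZMod 2) = 1 := by
    rw [aux_cast_parity, if_pos hodd]
  rw [h1] at h
  rcases Finset.eq_empty_or_nonempty (J ∩ cutEdges G W) with he | he
  · rw [he] at h
    simp at h
  · exact he

lemma aux_swap (C : Finset (Sym2 V)) (𝓕 : Finset (Finset (Sym2 V)))
    (lam : Finset (Sym2 V) → ℝ) (g : Finset (Sym2 V) → Finset (Sym2 V)) :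
    ∑ e ∈ C, ∑ F ∈ 𝓕.filter (fun F => e ∈ g F), lam F
      = ∑ F ∈ 𝓕, ((C ∩ g F).card : ℝ) * lam F := by
  simp only [Finset.sum_filter]
  rw [Finset.sum_comm]
  refine Finset.sum_congr rfl fun F _ => ?_
  rw [← Finset.filter_mem_eq_inter, Finset.card_filter, Nat.cast_sum, Finset.sum_mul]
  simp

lemma aux_one_le {C : Finset (Sym2 V)} {𝓕 : Finset (Finset (Sym2 V))}
    {lam : Finset (Sym2 V) → ℝ} {g : Finset (Sym2 V) → Finset (Sym2 V)}
    (hlam : ∀ F ∈ 𝓕, 0 < lam F) (hsum : ∑ F ∈ 𝓕, lam F = 1)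
    (hne : ∀ F ∈ 𝓕, (C ∩ g F).Nonempty) :
    1 ≤ ∑ F ∈ 𝓕, ((C ∩ g F).card : ℝ) * lam F := by
  rw [← hsum]
  refine Finset.sum_le_sum fun F hF => ?_
  have h1 : (1 : ℝ) ≤ ((C ∩ g F).card : ℝ) := by
    exact_mod_cast Finset.card_pos.mpr (hne F hF)
  nlinarith [hlam F hF]

end
/-- for every `T'` of even cardinality, `(x* + p*)/2 ∈ Q₊(G,T')`;
equivalently, `x*(C) + p*(C) ≥ 2` for every `T'`-cut `C`. -/
theorem stmt6 {V : Type*} [Fintype V] [DecidableEq V]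
    (G : SimpleGraph V) (hG : G.Connected)
    (T : Finset V) (hT : Even T.card)
    (c : Sym2 V → ℝ) (hc : ∀ e, 0 ≤ c e)
    (xstar : Sym2 V → ℝ) (hxP : memP G T xstar)
    (hxmin : ∀ y : Sym2 V → ℝ, memP G T y → dotE G c xstar ≤ dotE G c y)
    (𝓕 : Finset (Finset (Sym2 V))) (lam : Finset (Sym2 V) → ℝ)
    (h𝓕 : ∀ F ∈ 𝓕, IsSpanningTree G F) (hlam : ∀ F ∈ 𝓕, 0 < lam F)
    (hsum : ∑ F ∈ 𝓕, lam F = 1)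
    (hdom : ∀ e ∈ edgesOf G, (∑ F ∈ 𝓕.filter (fun F => e ∈ F), lam F) ≤ xstar e)
    (JT : Finset (Sym2 V) → Finset (Sym2 V))
    (hJT : ∀ F ∈ 𝓕, JT F ⊆ F ∧ IsTJoin G T (JT F)) :
    ∀ T' : Finset V, Even T'.card →
      memQplus G T' (fun e => (xstar e + pstar 𝓕 lam JT e) / 2) ∧
      ∀ W : Finset V, W.Nonempty → W ≠ Finset.univ → Odd ((W ∩ T').card) →
        2 ≤ xval xstar (cutEdges G W) + xval (pstar 𝓕 lam JT) (cutEdges G W) := by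
  have hpnonneg : ∀ e, 0 ≤ pstar 𝓕 lam JT e := fun e =>
    Finset.sum_nonneg fun F hF => (hlam F (Finset.mem_filter.mp hF).1).le
  have hmain : ∀ W : Finset V, W.Nonempty → W ≠ Finset.univ →
      2 ≤ xval xstar (cutEdges G W) + xval (pstar 𝓕 lam JT) (cutEdges G W) := by
    intro W hW hWu
    set C := cutEdges G W with hC
    have hpC : 0 ≤ xval (pstar 𝓕 lam JT) C := Finset.sum_nonneg fun e _ => hpnonneg e
    by_cases hpar : Even ((W ∩ T).card)
    · have := hxP.1 W hW hWu hpar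
      linarith
    · have hodd : Odd ((W ∩ T).card) := Nat.not_even_iff_odd.mp hpar
      have hJcut : ∀ F ∈ 𝓕, (C ∩ JT F).Nonempty := fun F hF => by
        have h := aux_join_cut_nonempty (hJT F hF).2 hodd
        rwa [Finset.inter_comm] at h
      have hFcut : ∀ F ∈ 𝓕, (C ∩ F).Nonempty := fun F hF => by
        obtain ⟨e, he⟩ := hJcut F hF
        exact ⟨e, Finset.mem_inter.mpr ⟨(Finset.mem_inter.mp he).1,
          (hJT F hF).1 (Finset.mem_inter.mp he).2⟩⟩
      have hx1 : 1 ≤ xval xstar C := by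
        have hle : ∑ e ∈ C, ∑ F ∈ 𝓕.filter (fun F => e ∈ F), lam F ≤ xval xstar C :=
          Finset.sum_le_sum fun e he => hdom e (Finset.filter_subset _ _ he)
        rw [aux_swap C 𝓕 lam (fun F => F)] at hle
        exact le_trans (aux_one_le hlam hsum hFcut) hle
      have hp1 : 1 ≤ xval (pstar 𝓕 lam JT) C := by
        have heq : xval (pstar 𝓕 lam JT) C = ∑ F ∈ 𝓕, ((C ∩ JT F).card : ℝ) * lam F := by
          simp only [xval, pstar]
          exact aux_swap C 𝓕 lam JT
        rw [heq]
        exact aux_one_le hlam hsum hJcut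
      linarith
  intro T' hT'
  refine ⟨⟨fun e he => ?_, fun W hW hWu hodd => ?_⟩, fun W hW hWu _ => hmain W hW hWu⟩
  · have h1 := (hxP.2.2 e he).1
    have h2 := hpnonneg e
    linarith
  · have h2 := hmain W hW hWu
    have heq : xval (fun e => (xstar e + pstar 𝓕 lam JT e) / 2) (cutEdges G W)
        = (xval xstar (cutEdges G W) + xval (pstar 𝓕 lam JT) (cutEdges G W)) / 2 := by
      simp only [xval, ← Finset.sum_div, Finset.sum_add_distrib]
    rw [heq]
    linarith
end

section
/- Let C₁ ≠ C₂ be cuts of G, let e be an edge, and let F be a spanning tree of G. Then it is impossible that both C₁ ∩ F = {e} and C₂ ∩ F = {e}. Moreover, if C₁ is a T-cut and C₁ ∩ F = {e}, then e ∈ F(T), the unique T-join contained in F. -/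
open scoped Classical
open Finset

/-!
If `δ(W) ∩ F = {s(a, b)}` with `a ∈ W`, then no edge of `F - ab` crosses `W`, while every vertex
is joined to `a` or to `b` in `F - ab`; so `W` is exactly the set of vertices joined to `a` in
`F - ab`. Hence a cut meeting `F` only in `e` is determined by `F` and `e` up to complementing
`W`, which does not change the cut.

For a `T`-join `J`, summing the `J`-degrees over `W` gives `|J ∩ δ(W)| ≡ |W ∩ T| (mod 2)`. So a
`T`-join contained in `F` meets the `T`-cut `δ(W)`, and `δ(W) ∩ F = {e}` forces `e ∈ J`.
-/

open SimpleGraph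

theorem SimpleGraph.Connected.reachable_deleteEdges_or {V : Type*} {G : SimpleGraph V}
    (hG : G.Connected) (a b w : V) :
    (G.deleteEdges {s(a, b)}).Reachable a w ∨ (G.deleteEdges {s(a, b)}).Reachable b w := by
  suffices h : ∀ u, G.Walk u w → (G.deleteEdges {s(a, b)}).Reachable a u ∨
      (G.deleteEdges {s(a, b)}).Reachable b u →
      (G.deleteEdges {s(a, b)}).Reachable a w ∨ (G.deleteEdges {s(a, b)}).Reachable b w from
    h a (hG.preconnected a w).some (Or.inl .rfl)
  intro u p
  induction p with
  | nil => exact id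
  | @cons u v w huv p ih =>
    intro hu
    apply ih
    by_cases he : s(u, v) = s(a, b)
    · rcases Sym2.eq_iff.1 he with ⟨-, rfl⟩ | ⟨-, rfl⟩
      exacts [Or.inr .rfl, Or.inl .rfl]
    · have hadj : (G.deleteEdges {s(a, b)}).Adj u v := by simp [huv, he]
      exact hu.imp (·.trans hadj.reachable) (·.trans hadj.reachable)

section

variable {V : Type*} [Fintype V] [DecidableEq V] {G : SimpleGraph V}

lemma mk_mem_cutEdges_iff {W : Finset V} {a b : V} :
    s(a, b) ∈ cutEdges G W ↔ s(a, b) ∈ edgesOf G ∧ (a ∈ W ∧ b ∉ W ∨ b ∈ W ∧ a ∉ W) := by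
  simp only [cutEdges, mem_filter, Sym2.eq_iff]
  constructor
  · rintro ⟨hab, u, v, (⟨rfl, rfl⟩ | ⟨rfl, rfl⟩), hu, hv⟩
    exacts [⟨hab, .inl ⟨hu, hv⟩⟩, ⟨hab, .inr ⟨hu, hv⟩⟩]
  · rintro ⟨hab, ⟨ha, hb⟩ | ⟨hb, ha⟩⟩
    exacts [⟨hab, a, b, .inl ⟨rfl, rfl⟩, ha, hb⟩, ⟨hab, b, a, .inr ⟨rfl, rfl⟩, hb, ha⟩]

lemma cutEdges_compl (G : SimpleGraph V) (W : Finset V) : cutEdges G Wᶜ = cutEdges G W := by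
  ext e
  induction e using Sym2.ind with
  | _ a b => simp only [mk_mem_cutEdges_iff, mem_compl, not_not]; tauto

lemma mem_of_reachable_of_cutEdges_inter_eq_singleton {W : Finset V} {F : Finset (Sym2 V)}
    {e : Sym2 V} {u v : V} (hFG : F ⊆ edgesOf G) (hcut : cutEdges G W ∩ F = {e})
    (huv : ((fromEdgeSet (F : Set (Sym2 V))).deleteEdges {e}).Reachable u v) (hu : u ∈ W) :
    v ∈ W := by
  by_contra hv
  obtain ⟨p⟩ := huv
  obtain ⟨d, -, hd₁, hd₂⟩ := p.exists_boundary_dart (W : Set V) hu hv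
  have hd : s(d.fst, d.snd) ∈ F ∧ s(d.fst, d.snd) ≠ e := by
    simpa using d.adj
  have hcross : s(d.fst, d.snd) ∈ cutEdges G W ∩ F :=
    mem_inter.2 ⟨mk_mem_cutEdges_iff.2 ⟨hFG hd.1, .inl ⟨hd₁, hd₂⟩⟩, hd.1⟩
  rw [hcut, mem_singleton] at hcross
  exact hd.2 hcross

lemma mem_iff_reachable_of_cutEdges_inter_eq_singleton {W : Finset V} {F : Finset (Sym2 V)}
    {a b : V} (hFG : F ⊆ edgesOf G) (hF : (fromEdgeSet (F : Set (Sym2 V))).Connected)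
    (hcut : cutEdges G W ∩ F = {s(a, b)}) (ha : a ∈ W) (v : V) :
    v ∈ W ↔ ((fromEdgeSet (F : Set (Sym2 V))).deleteEdges {s(a, b)}).Reachable a v := by
  have hb : b ∉ W := by
    have hab : s(a, b) ∈ cutEdges G W := (mem_inter.1 (singleton_subset_iff.1 hcut.superset)).1
    have := (mk_mem_cutEdges_iff.1 hab).2
    tauto
  refine ⟨fun hv => ?_, fun h => mem_of_reachable_of_cutEdges_inter_eq_singleton hFG hcut h ha⟩
  refine (hF.reachable_deleteEdges_or a b v).resolve_right fun h => hb ?_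
  exact mem_of_reachable_of_cutEdges_inter_eq_singleton hFG hcut h.symm hv

lemma cutEdges_eq_of_inter_eq_singleton {W₁ W₂ : Finset V} {F : Finset (Sym2 V)} {e : Sym2 V}
    (hFG : F ⊆ edgesOf G) (hF : (fromEdgeSet (F : Set (Sym2 V))).Connected)
    (h₁ : cutEdges G W₁ ∩ F = {e}) (h₂ : cutEdges G W₂ ∩ F = {e}) :
    cutEdges G W₁ = cutEdges G W₂ := by
  obtain ⟨-, a, b, rfl, ha, -⟩ : e ∈ edgesOf G ∧ ∃ a b, e = s(a, b) ∧ a ∈ W₁ ∧ b ∉ W₁ :=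
    mem_filter.1 (mem_inter.1 (singleton_subset_iff.1 h₁.superset)).1
  have key : ∀ W, cutEdges G W ∩ F = {s(a, b)} → a ∈ W → W₁ = W := fun W h haW =>
    Finset.ext fun v => (mem_iff_reachable_of_cutEdges_inter_eq_singleton hFG hF h₁ ha v).trans
      (mem_iff_reachable_of_cutEdges_inter_eq_singleton hFG hF h haW v).symm
  by_cases ha₂ : a ∈ W₂
  · rw [key W₂ h₂ ha₂]
  · rw [← cutEdges_compl G W₂, key W₂ᶜ (by rwa [cutEdges_compl]) (mem_compl.2 ha₂)]

end

lemma sum_degOn_eq_sum_card_filter_mem {V : Type*} [DecidableEq V] (J : Finset (Sym2 V))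
    (W : Finset V) : ∑ v ∈ W, degOn J v = ∑ f ∈ J, #{v ∈ W | v ∈ f} := by
  simp only [degOn, card_filter]
  exact sum_comm

section

variable {V : Type*} [Fintype V] [DecidableEq V] {G : SimpleGraph V}

lemma cast_card_filter_mem_eq_ite {W : Finset V} {f : Sym2 V} (hf : f ∈ edgesOf G) :
    (#{v ∈ W | v ∈ f} : ZMod 2) = if f ∈ cutEdges G W then 1 else 0 := by
  induction f using Sym2.ind with
  | _ a b =>
    have hab : a ≠ b := G.ne_of_adj (by simpa [edgesOf] using hf)
    have : {v ∈ W | v ∈ s(a, b)} = {v ∈ W | v = a} ∪ {v ∈ W | v = b} := by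
      rw [← filter_or]; simp [Sym2.mem_iff]
    rw [this, card_union_of_disjoint (disjoint_filter.2 fun v _ h => h ▸ hab), filter_eq',
      filter_eq']
    simp only [mk_mem_cutEdges_iff, hf, true_and]
    by_cases ha : a ∈ W <;> by_cases hb : b ∈ W <;> simp [ha, hb, CharTwo.two_eq_zero]

lemma cast_degOn_eq_ite {T : Finset V} {J : Finset (Sym2 V)} (hJ : IsTJoin G T J) (v : V) :
    (degOn J v : ZMod 2) = if v ∈ T then 1 else 0 := by
  simp only [← hJ.2, oddVerts, mem_filter, mem_univ, true_and]
  split_ifs with h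
  · exact ZMod.natCast_eq_one_iff_odd.2 h
  · exact ZMod.natCast_eq_zero_iff_even.2 (Nat.not_odd_iff_even.1 h)

lemma cast_card_filter_mem_cutEdges {T : Finset V} {J : Finset (Sym2 V)} (hJ : IsTJoin G T J)
    (W : Finset V) : (#{f ∈ J | f ∈ cutEdges G W} : ZMod 2) = #(W ∩ T) := calc
  (#{f ∈ J | f ∈ cutEdges G W} : ZMod 2) = ∑ f ∈ J, if f ∈ cutEdges G W then 1 else 0 := by
    rw [sum_boole]
  _ = ∑ f ∈ J, (#{v ∈ W | v ∈ f} : ZMod 2) :=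
    sum_congr rfl fun f hf => (cast_card_filter_mem_eq_ite (hJ.1 hf)).symm
  _ = ∑ v ∈ W, (degOn J v : ZMod 2) := by
    rw [← Nat.cast_sum, ← Nat.cast_sum, sum_degOn_eq_sum_card_filter_mem]
  _ = ∑ v ∈ W, if v ∈ T then 1 else 0 := sum_congr rfl fun v _ => cast_degOn_eq_ite hJ v
  _ = #(W ∩ T) := by rw [sum_boole, filter_mem_eq_inter]

lemma mem_of_cutEdges_inter_eq_singleton {T W : Finset V} {F J : Finset (Sym2 V)} {e : Sym2 V}
    (hJF : J ⊆ F) (hJ : IsTJoin G T J) (hodd : Odd #(W ∩ T)) (hcut : cutEdges G W ∩ F = {e}) :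
    e ∈ J := by
  have hpos : 0 < #{f ∈ J | f ∈ cutEdges G W} := by
    refine (ZMod.natCast_eq_one_iff_odd.1 ?_).pos
    rw [cast_card_filter_mem_cutEdges hJ W, ZMod.natCast_eq_one_iff_odd.2 hodd]
  obtain ⟨f, hf⟩ := card_pos.1 hpos
  obtain ⟨hfJ, hfW⟩ := mem_filter.1 hf
  have hfe : f ∈ cutEdges G W ∩ F := mem_inter.2 ⟨hfW, hJF hfJ⟩
  rw [hcut, mem_singleton] at hfe
  exact hfe ▸ hfJ

end

theorem stmt10_general {V : Type*} [Fintype V] [DecidableEq V]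
    (G : SimpleGraph V)
    (T : Finset V)
    (W₁ W₂ : Finset V)
    (hne : cutEdges G W₁ ≠ cutEdges G W₂)
    (e : Sym2 V) (F : Finset (Sym2 V)) (hF : IsSpanningTree G F) :
    ¬(cutEdges G W₁ ∩ F = {e} ∧ cutEdges G W₂ ∩ F = {e}) ∧
    (Odd ((W₁ ∩ T).card) → cutEdges G W₁ ∩ F = {e} →
      ∀ J : Finset (Sym2 V), J ⊆ F → IsTJoin G T J → e ∈ J) :=
  ⟨fun ⟨h₁, h₂⟩ => hne (cutEdges_eq_of_inter_eq_singleton hF.1 hF.2.1 h₁ h₂),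
    fun hodd hcut _ hJF hJ => mem_of_cutEdges_inter_eq_singleton hJF hJ hodd hcut⟩

/-- distinct cuts cannot both intersect a spanning tree `F` in the
same single edge `{e}`; and if a `T`-cut intersects `F` exactly in `{e}`, then `e`
belongs to the (unique) `T`-join contained in `F`. -/
theorem stmt10 {V : Type*} [Fintype V] [DecidableEq V]
    (G : SimpleGraph V) (hG : G.Connected)
    (T : Finset V) (hT : Even T.card)
    (W₁ W₂ : Finset V) (hW₁ : W₁.Nonempty) (hW₁' : W₁ ≠ Finset.univ)
    (hW₂ : W₂.Nonempty) (hW₂' : W₂ ≠ Finset.univ)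
    (hne : cutEdges G W₁ ≠ cutEdges G W₂)
    (e : Sym2 V) (F : Finset (Sym2 V)) (hF : IsSpanningTree G F) :
    ¬(cutEdges G W₁ ∩ F = {e} ∧ cutEdges G W₂ ∩ F = {e}) ∧
    (Odd ((W₁ ∩ T).card) → cutEdges G W₁ ∩ F = {e} →
      ∀ J : Finset (Sym2 V), J ⊆ F → IsTJoin G T J → e ∈ J) :=
  stmt10_general G T W₁ W₂ hne e F hF
end

section
/- Let β ∈ (1/3, 1/2), let F ∈ ℱ_{>0}, and let C be a (T_F △ T)-cut of G such that β·x*(C) + (1 − 2β)·|C ∩ F| < 1. Then x*(C) < 2, |C ∩ F| ≥ 2, and 1 − (β·x*(C) + (1 − 2β)·|C ∩ F|) ≤ 4β − 1 − β·x*(C). -/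
open scoped Classical
open Finset

/-!
The tree `F` meets every cut, and by the handshake lemma `|δ(W) ∩ F| ≡ |W ∩ T_F| (mod 2)`.
If `|δ(W) ∩ F| = 1`, then `|W ∩ T_F|` is odd, so `|W ∩ T|` is even because `W` is a
`(T_F △ T)`-cut; hence `x*(δ(W)) ≥ 2` and the deficit is not positive. Once `|δ(W) ∩ F| ≥ 2`,
the three claims are linear consequences of `0 < β < 1/2`.
-/

lemma odd_card_filter_mem_iff {V : Type*} [DecidableEq V] {e : Sym2 V} (he : ¬ e.IsDiag)
    (W : Finset V) : Odd #{v ∈ W | v ∈ e} ↔ ∃ u v, e = s(u, v) ∧ u ∈ W ∧ v ∉ W := by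
  induction e using Sym2.ind with
  | _ a b =>
    have hab : a ≠ b := by simpa using he
    have hfilter : {v ∈ W | v ∈ s(a, b)} = W ∩ {a, b} := by ext; simp
    rw [hfilter]
    by_cases ha : a ∈ W <;> by_cases hb : b ∈ W <;>
      simp only [ha, hb, inter_insert_of_mem, inter_insert_of_notMem, inter_singleton_of_mem,
        inter_singleton_of_notMem, card_pair hab, card_singleton, card_empty, not_false_eq_true] <;>
      grind

section SymDiff

variable {V : Type*} [DecidableEq V]

lemma inter_symDiff (W A B : Finset V) : W ∩ symDiff A B = symDiff (W ∩ A) (W ∩ B) := by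
  ext; simp only [symDiff, Finset.mem_inter, Finset.mem_union, Finset.mem_sdiff]; tauto

lemma card_symDiff_add_two_mul_card_inter (A B : Finset V) :
    #(symDiff A B) + 2 * #(A ∩ B) = #A + #B := by
  have hdisj : Disjoint (A \ B) (B \ A) := disjoint_sdiff_sdiff
  rw [symDiff, Finset.card_union_of_disjoint hdisj, ← Finset.card_sdiff_add_card_inter A B,
    ← Finset.card_sdiff_add_card_inter B A, Finset.inter_comm B A]
  ring

lemma odd_card_symDiff_iff (A B : Finset V) : Odd #(symDiff A B) ↔ (Odd #A ↔ Even #B) := by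
  rw [← Nat.odd_add, ← card_symDiff_add_two_mul_card_inter]
  simp [Nat.odd_add, parity_simps]

end SymDiff

section Cuts

variable {V : Type*} [Fintype V] [DecidableEq V]

-- Double counting the incidences `v ∈ e` with `v ∈ W`, `e ∈ J` (handshake lemma mod 2).
lemma odd_card_cutEdges_inter_iff {G : SimpleGraph V} {J : Finset (Sym2 V)}
    (hJ : J ⊆ edgesOf G) (W : Finset V) :
    Odd #(cutEdges G W ∩ J) ↔ Odd #(W ∩ oddVerts J) := by
  have hdouble : ∑ v ∈ W, degOn J v = ∑ e ∈ J, #{v ∈ W | v ∈ e} :=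
    Finset.sum_card_bipartiteAbove_eq_sum_card_bipartiteBelow (fun v e => v ∈ e)
  have hcut : cutEdges G W ∩ J = {e ∈ J | Odd #{v ∈ W | v ∈ e}} := by
    ext e
    have hdiag : e ∈ J → ¬ e.IsDiag := fun he =>
      G.not_isDiag_of_mem_edgeSet (by simpa [edgesOf] using hJ he)
    simp only [cutEdges, Finset.mem_inter, Finset.mem_filter]
    constructor
    · rintro ⟨⟨-, hcross⟩, he⟩
      exact ⟨he, (odd_card_filter_mem_iff (hdiag he) W).mpr hcross⟩
    · rintro ⟨he, hodd⟩
      exact ⟨⟨hJ he, (odd_card_filter_mem_iff (hdiag he) W).mp hodd⟩, he⟩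
  have hodd : W ∩ oddVerts J = {v ∈ W | Odd (degOn J v)} := by
    ext; simp [oddVerts, and_comm]
  rw [hcut, hodd, ← Finset.odd_sum_iff_odd_card_odd, ← Finset.odd_sum_iff_odd_card_odd, hdouble]

lemma cutEdges_inter_nonempty {G : SimpleGraph V} {F : Finset (Sym2 V)} (hF : F ⊆ edgesOf G)
    (hconn : (SimpleGraph.fromEdgeSet (F : Set (Sym2 V))).Connected) {W : Finset V}
    (hW : W.Nonempty) (hW' : W ≠ Finset.univ) : (cutEdges G W ∩ F).Nonempty := by
  obtain ⟨u, hu⟩ := hW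
  obtain ⟨v, hv⟩ : ∃ v, v ∉ W := by simpa [Finset.eq_univ_iff_forall] using hW'
  obtain ⟨d, -, hd, hd'⟩ := ((hconn u v).some).exists_boundary_dart W hu hv
  have hdF : s(d.fst, d.snd) ∈ F := by simpa using d.adj
  exact ⟨_, Finset.mem_inter.mpr ⟨Finset.mem_filter.mpr ⟨hF hdF, _, _, rfl, hd, hd'⟩, hdF⟩⟩

lemma even_card_inter_of_odd_card_cutEdges_inter {G : SimpleGraph V} {J : Finset (Sym2 V)}
    (hJ : J ⊆ edgesOf G) {T W : Finset V} (hW : Odd #(W ∩ symDiff (oddVerts J) T))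
    (hodd : Odd #(cutEdges G W ∩ J)) : Even #(W ∩ T) := by
  rw [inter_symDiff, odd_card_symDiff_iff] at hW
  exact hW.mp ((odd_card_cutEdges_inter_iff hJ W).mp hodd)

end Cuts

lemma deficit_bounds_of_two_le {β x k : ℝ} (hβ0 : 0 < β) (hβ : β < 1 / 2) (hk : 2 ≤ k)
    (h : β * x + (1 - 2 * β) * k < 1) :
    x < 2 ∧ 1 - (β * x + (1 - 2 * β) * k) ≤ 4 * β - 1 - β * x := by
  have hβx : β * x < 4 * β - 1 := by nlinarith
  constructor <;> nlinarith

theorem stmt12_general {V : Type*} [Fintype V] [DecidableEq V]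
    (G : SimpleGraph V)
    (T : Finset V)
    (xstar : Sym2 V → ℝ) (hxP : memP G T xstar)
    (𝓕 : Finset (Finset (Sym2 V)))
    (h𝓕 : ∀ F ∈ 𝓕, IsSpanningTree G F)
    (β : ℝ) (hβ1 : 1 / 3 < β) (hβ2 : β < 1 / 2)
    (F : Finset (Sym2 V)) (hF : F ∈ 𝓕)
    (W : Finset V) (hW : W.Nonempty) (hW' : W ≠ Finset.univ)
    (hWcut : Odd ((W ∩ symDiff (oddVerts F) T).card))
    (hdef : β * xval xstar (cutEdges G W) +
      (1 - 2 * β) * ((cutEdges G W ∩ F).card : ℝ) < 1) :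
    xval xstar (cutEdges G W) < 2 ∧
    2 ≤ (cutEdges G W ∩ F).card ∧
    1 - (β * xval xstar (cutEdges G W) + (1 - 2 * β) * ((cutEdges G W ∩ F).card : ℝ)) ≤
      4 * β - 1 - β * xval xstar (cutEdges G W) := by
  obtain ⟨hFG, hFconn, -⟩ := h𝓕 F hF
  have hβ0 : 0 < β := by linarith
  have hk2 : 2 ≤ #(cutEdges G W ∩ F) := by
    have hk1 : 1 ≤ #(cutEdges G W ∩ F) :=
      Finset.card_pos.mpr (cutEdges_inter_nonempty hFG hFconn hW hW')
    by_contra! hk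
    have hk_eq : #(cutEdges G W ∩ F) = 1 := by omega
    have hx2 : 2 ≤ xval xstar (cutEdges G W) := hxP.1 W hW hW'
      (even_card_inter_of_odd_card_cutEdges_inter hFG hWcut (hk_eq ▸ odd_one))
    rw [hk_eq, Nat.cast_one] at hdef
    nlinarith
  obtain ⟨hx, hdeficit⟩ := deficit_bounds_of_two_le hβ0 hβ2 (by exact_mod_cast hk2) hdef
  exact ⟨hx, hk2, hdeficit⟩

/-- if a `(T_F △ T)`-cut `C` has positive deficit for `β`, then
`x*(C) < 2`, `|C ∩ F| ≥ 2`, and the deficit is at most `4β - 1 - β x*(C)`. -/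
theorem stmt12 {V : Type*} [Fintype V] [DecidableEq V]
    (G : SimpleGraph V) (hG : G.Connected)
    (T : Finset V) (hT : Even T.card)
    (c : Sym2 V → ℝ) (hc : ∀ e, 0 ≤ c e)
    (xstar : Sym2 V → ℝ) (hxP : memP G T xstar)
    (hxmin : ∀ y : Sym2 V → ℝ, memP G T y → dotE G c xstar ≤ dotE G c y)
    (𝓕 : Finset (Finset (Sym2 V))) (lam : Finset (Sym2 V) → ℝ)
    (h𝓕 : ∀ F ∈ 𝓕, IsSpanningTree G F) (hlam : ∀ F ∈ 𝓕, 0 < lam F)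
    (hsum : ∑ F ∈ 𝓕, lam F = 1)
    (hdom : ∀ e ∈ edgesOf G, (∑ F ∈ 𝓕.filter (fun F => e ∈ F), lam F) ≤ xstar e)
    (β : ℝ) (hβ1 : 1 / 3 < β) (hβ2 : β < 1 / 2)
    (F : Finset (Sym2 V)) (hF : F ∈ 𝓕)
    (W : Finset V) (hW : W.Nonempty) (hW' : W ≠ Finset.univ)
    (hWcut : Odd ((W ∩ symDiff (oddVerts F) T).card))
    (hdef : β * xval xstar (cutEdges G W) +
      (1 - 2 * β) * ((cutEdges G W ∩ F).card : ℝ) < 1) :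
    xval xstar (cutEdges G W) < 2 ∧
    2 ≤ (cutEdges G W ∩ F).card ∧
    1 - (β * xval xstar (cutEdges G W) + (1 - 2 * β) * ((cutEdges G W ∩ F).card : ℝ)) ≤
      4 * β - 1 - β * xval xstar (cutEdges G W) :=
  stmt12_general G T xstar hxP 𝓕 h𝓕 β hβ1 hβ2 F hF W hW hW' hWcut hdef
end

section
/- Let β ∈ [1/3, 1/2) and set ω₀ := 1 − √(1/β − 2). Then for every t ∈ [1, 2): (t − 1)·max{0, (4β − 1 − βt)/(2 − t)} ≤ β·ω₀·(3 − 1/β − ω₀)/(1 − ω₀). In particular, for every Q ∈ 𝒬, ( Σ_{F∈ℱ_{>0}, |Q∩F|≥2} λ_F )·f^Q(β) ≤ β·ω₀·(3 − 1/β − ω₀)/(1 − ω₀). -/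
open scoped Classical
open Finset

private lemma cross_walk {V : Type*} {G' : SimpleGraph V} {W : Finset V} :
    ∀ {u v : V}, G'.Walk u v → u ∈ W → v ∉ W →
      ∃ a b, G'.Adj a b ∧ a ∈ W ∧ b ∉ W := by
  intro u v w
  induction w with
  | nil => intro hu hv; exact absurd hu hv
  | @cons a b c h p ih =>
    intro hu hv
    by_cases hb : b ∈ W
    · exact ih hb hv
    · exact ⟨a, b, h, hu, hb⟩

/-- for `β ∈ [1/3, 1/2)` and `ω₀ = 1 - √(1/β - 2)`, the deficit bound
`(t-1)·max{0, (4β-1-βt)/(2-t)} ≤ β ω₀ (3 - 1/β - ω₀)/(1 - ω₀)` holds for `t ∈ [1,2)`;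
in particular `Pr(|Q∩𝓕| ≥ 2)·f^Q(β)` obeys this bound for every `Q ∈ 𝒬`. -/
theorem stmt15 {V : Type*} [Fintype V] [DecidableEq V]
    (G : SimpleGraph V) (hG : G.Connected)
    (T : Finset V) (hT : Even T.card)
    (c : Sym2 V → ℝ) (hc : ∀ e, 0 ≤ c e)
    (xstar : Sym2 V → ℝ) (hxP : memP G T xstar)
    (hxmin : ∀ y : Sym2 V → ℝ, memP G T y → dotE G c xstar ≤ dotE G c y)
    (𝓕 : Finset (Finset (Sym2 V))) (lam : Finset (Sym2 V) → ℝ)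
    (h𝓕 : ∀ F ∈ 𝓕, IsSpanningTree G F) (hlam : ∀ F ∈ 𝓕, 0 < lam F)
    (hsum : ∑ F ∈ 𝓕, lam F = 1)
    (hdom : ∀ e ∈ edgesOf G, (∑ F ∈ 𝓕.filter (fun F => e ∈ F), lam F) ≤ xstar e)
    (β : ℝ) (hβ1 : 1 / 3 ≤ β) (hβ2 : β < 1 / 2) :
    (∀ t : ℝ, 1 ≤ t → t < 2 →
      (t - 1) * max 0 ((4 * β - 1 - β * t) / (2 - t)) ≤
        β * (1 - Real.sqrt (1 / β - 2)) *
          (3 - 1 / β - (1 - Real.sqrt (1 / β - 2))) /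
          (1 - (1 - Real.sqrt (1 / β - 2)))) ∧
    (∀ C ∈ Qset G xstar,
      (∑ F ∈ 𝓕.filter (fun F => 2 ≤ (C ∩ F).card), lam F) * fQ xstar β C ≤
        β * (1 - Real.sqrt (1 / β - 2)) *
          (3 - 1 / β - (1 - Real.sqrt (1 / β - 2))) /
          (1 - (1 - Real.sqrt (1 / β - 2)))) := by
  
  have hβ0 : (0:ℝ) < β := lt_of_lt_of_le (by norm_num) hβ1
  set s := Real.sqrt (1 / β - 2) with hsdef
  have h2pos : 0 < 1 / β - 2 := by
    have : 2 < 1 / β := by rw [lt_div_iff₀ hβ0]; linarith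
    linarith
  have hspos : 0 < s := Real.sqrt_pos.mpr h2pos
  have hs2 : s ^ 2 = 1 / β - 2 := Real.sq_sqrt h2pos.le
  have hβs : β * s ^ 2 = 1 - 2 * β := by
    rw [hs2, mul_sub, mul_one_div, div_self hβ0.ne']; ring
  have hRHS : β * (1 - s) * (3 - 1 / β - (1 - s)) / (1 - (1 - s)) = β * (1 - s) ^ 2 := by
    have h3 : 3 - 1 / β - (1 - s) = s - s ^ 2 := by
      have := hs2; linarith
    have h4 : (1:ℝ) - (1 - s) = s := by ring
    rw [h3, h4, div_eq_iff hspos.ne']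
    ring
  have key : ∀ t : ℝ, 1 ≤ t → t < 2 →
      (t - 1) * max 0 ((4 * β - 1 - β * t) / (2 - t)) ≤ β * (1 - s) ^ 2 := by
    intro t ht1 ht2
    have hu : 0 < 2 - t := by linarith
    rcases le_or_gt (4 * β - 1 - β * t) 0 with h | h
    · have hle : (4 * β - 1 - β * t) / (2 - t) ≤ 0 :=
        div_nonpos_of_nonpos_of_nonneg h hu.le
      rw [max_eq_left hle, mul_zero]
      positivity
    · have hmax : max 0 ((4 * β - 1 - β * t) / (2 - t)) = (4 * β - 1 - β * t) / (2 - t) :=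
        max_eq_right (le_of_lt (div_pos h hu))
      rw [hmax, mul_div_assoc']
      rw [div_le_iff₀ hu]
      nlinarith [mul_nonneg hβ0.le (sq_nonneg (2 - t - s)), hβs]
  constructor
  · intro t ht1 ht2
    rw [hRHS]
    exact key t ht1 ht2
  · intro C hC
    rw [hRHS]
    simp only [Qset, Finset.mem_filter, Finset.mem_univ, true_and] at hC
    obtain ⟨⟨W, hWne, hWuniv, hCW⟩, hlt⟩ := hC
    have hCsub : C ⊆ edgesOf G := by
      rw [hCW]; exact Finset.filter_subset _ _
    -- every spanning tree crosses the cut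
    have hcross : ∀ F ∈ 𝓕, 1 ≤ (C ∩ F).card := by
      intro F hF
      obtain ⟨hFsub, hFconn, _⟩ := h𝓕 F hF
      obtain ⟨u, hu⟩ := hWne
      have : ∃ v, v ∉ W := by
        by_contra h
        push_neg at h
        exact hWuniv (Finset.eq_univ_iff_forall.mpr h)
      obtain ⟨v, hv⟩ := this
      obtain ⟨w⟩ := hFconn.preconnected u v
      obtain ⟨a, b, hadj, haW, hbW⟩ := cross_walk w hu hv
      rw [SimpleGraph.fromEdgeSet_adj] at hadj
      have heF : s(a, b) ∈ F := hadj.1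
      have heC : s(a, b) ∈ C := by
        rw [hCW]
        exact Finset.mem_filter.mpr ⟨hFsub heF, ⟨a, b, rfl, haW, hbW⟩⟩
      exact Finset.card_pos.mpr ⟨s(a, b), Finset.mem_inter.mpr ⟨heC, heF⟩⟩
    have hsum1 : ∑ F ∈ 𝓕, lam F * ((C ∩ F).card : ℝ) ≤ xval xstar C := by
      have heq : ∀ F ∈ 𝓕, lam F * ((C ∩ F).card : ℝ) =
          ∑ e ∈ C, if e ∈ F then lam F else 0 := by
        intro F _
        rw [Finset.sum_ite_mem, Finset.sum_const, nsmul_eq_mul, mul_comm]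
      rw [Finset.sum_congr rfl heq, Finset.sum_comm]
      unfold xval
      apply Finset.sum_le_sum
      intro e he
      calc (∑ F ∈ 𝓕, if e ∈ F then lam F else 0)
          = ∑ F ∈ 𝓕.filter (fun F => e ∈ F), lam F := (Finset.sum_filter _ _).symm
        _ ≤ xstar e := hdom e (hCsub he)
    have ht1 : 1 ≤ xval xstar C := by
      have h1 : (1:ℝ) = ∑ F ∈ 𝓕, lam F := hsum.symm
      have h2 : ∑ F ∈ 𝓕, lam F ≤ ∑ F ∈ 𝓕, lam F * ((C ∩ F).card : ℝ) := by
        apply Finset.sum_le_sum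
        intro F hF
        have : (1:ℝ) ≤ ((C ∩ F).card : ℝ) := by exact_mod_cast hcross F hF
        nlinarith [hlam F hF]
      linarith
    have hfilt : ∑ F ∈ 𝓕.filter (fun F => 2 ≤ (C ∩ F).card), lam F ≤ xval xstar C - 1 := by
      have h3 : ∑ F ∈ 𝓕.filter (fun F => 2 ≤ (C ∩ F).card), lam F ≤
          ∑ F ∈ 𝓕, lam F * (((C ∩ F).card : ℝ) - 1) := by
        rw [Finset.sum_filter]
        apply Finset.sum_le_sum
        intro F hF
        by_cases h : 2 ≤ (C ∩ F).card
        · simp only [h, if_true]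
          have : (2:ℝ) ≤ ((C ∩ F).card : ℝ) := by exact_mod_cast h
          nlinarith [hlam F hF]
        · simp only [h, if_false]
          have : (1:ℝ) ≤ ((C ∩ F).card : ℝ) := by exact_mod_cast hcross F hF
          nlinarith [hlam F hF]
      have h4 : ∑ F ∈ 𝓕, lam F * (((C ∩ F).card : ℝ) - 1) =
          (∑ F ∈ 𝓕, lam F * ((C ∩ F).card : ℝ)) - 1 := by
        have he : ∀ F ∈ 𝓕, lam F * (((C ∩ F).card : ℝ) - 1) =
            lam F * ((C ∩ F).card : ℝ) - lam F := fun F _ => by ring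
        rw [Finset.sum_congr rfl he, Finset.sum_sub_distrib, hsum]
      linarith
    have hfnn : 0 ≤ fQ xstar β C := le_max_left _ _
    have hlnn : 0 ≤ ∑ F ∈ 𝓕.filter (fun F => 2 ≤ (C ∩ F).card), lam F :=
      Finset.sum_nonneg fun F hF => (hlam F (Finset.mem_filter.mp hF).1).le
    calc (∑ F ∈ 𝓕.filter (fun F => 2 ≤ (C ∩ F).card), lam F) * fQ xstar β C
        ≤ (xval xstar C - 1) * fQ xstar β C :=
          mul_le_mul_of_nonneg_right hfilt hfnn
      _ ≤ β * (1 - s) ^ 2 := key (xval xstar C) ht1 hlt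
end
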